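/- arXiv:1507.00144 — 5 statements merged into one kernel-verified Lean document; each statement's English description precedes it below -/
import Mathlib

section
/- The distance from the origin in ℝ² (with Euclidean norm) to the hyperbola {(x,p) : xp = 2πkℏ}, for a nonzero integer k, equals √(4π|k|ℏ); in particular the zero set of Θ(x,p) = sinc(xp/(2ℏ)) has distance exactly √(4πℏ) from the origin. -/
open Real Metric

lemma aux_infDist (S : Set (EuclideanSpace ℝ (Fin 2))) (r : ℝ)
    (hmem : ∃ z ∈ S, ‖z‖ = r) (hbd : ∀ z ∈ S, r ≤ ‖z‖) :
    Metric.infDist (0 : EuclideanSpace ℝ (Fin 2)) S = r := by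
  obtain ⟨z, hz, hzr⟩ := hmem
  apply le_antisymm
  · have := Metric.infDist_le_dist_of_mem (x := (0 : EuclideanSpace ℝ (Fin 2))) hz
    rwa [dist_zero_left, hzr] at this
  · by_contra h
    rw [not_le, Metric.infDist_lt_iff ⟨z, hz⟩] at h
    obtain ⟨y, hy, hlt⟩ := h
    rw [dist_zero_left] at hlt
    exact absurd (hbd y hy) (not_le.mpr hlt)

lemma aux_pt (a b : ℝ) :
    ∃ z : EuclideanSpace ℝ (Fin 2), z 0 = a ∧ z 1 = b ∧ ‖z‖ = Real.sqrt (a^2 + b^2) := by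
  refine ⟨(WithLp.equiv 2 (Fin 2 → ℝ)).symm ![a, b], rfl, rfl, ?_⟩
  rw [EuclideanSpace.norm_eq]
  simp [Fin.sum_univ_two, sq_abs, sq]

theorem dist_origin_hyperbola (ℏ : ℝ) (hℏ : 0 < ℏ) :
    (∀ k : ℤ, k ≠ 0 →
      Metric.infDist (0 : EuclideanSpace ℝ (Fin 2))
        {z : EuclideanSpace ℝ (Fin 2) | z 0 * z 1 = 2 * π * (k : ℝ) * ℏ}
        = Real.sqrt (4 * π * |(k : ℝ)| * ℏ)) ∧
    Metric.infDist (0 : EuclideanSpace ℝ (Fin 2))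
        {z : EuclideanSpace ℝ (Fin 2) | ∃ k : ℤ, k ≠ 0 ∧ z 0 * z 1 = 2 * π * (k : ℝ) * ℏ}
        = Real.sqrt (4 * π * ℏ) := by
  have hpi := Real.pi_pos
  have key : ∀ (k : ℤ), k ≠ 0 → ∀ z : EuclideanSpace ℝ (Fin 2),
      z 0 * z 1 = 2 * π * (k : ℝ) * ℏ → Real.sqrt (4 * π * |(k : ℝ)| * ℏ) ≤ ‖z‖ := by
    intro k hk z hz
    have hnorm : ‖z‖ = Real.sqrt ((z 0)^2 + (z 1)^2) := by
      rw [EuclideanSpace.norm_eq]; simp [Fin.sum_univ_two, sq_abs, sq]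
    rw [hnorm]
    apply Real.sqrt_le_sqrt
    have h2 : 2 * |z 0 * z 1| ≤ (z 0)^2 + (z 1)^2 := by
      rcases abs_cases (z 0 * z 1) with ⟨h, _⟩ | ⟨h, _⟩ <;>
        nlinarith [sq_nonneg (z 0 - z 1), sq_nonneg (z 0 + z 1)]
    have : 2 * |z 0 * z 1| = 4 * π * |(k:ℝ)| * ℏ := by
      rw [hz, abs_mul, abs_mul, abs_mul]
      rw [abs_of_pos (by norm_num : (0:ℝ) < 2), abs_of_pos hpi, abs_of_pos hℏ]
      ring
    linarith
  have mem : ∀ (k : ℤ), k ≠ 0 → ∃ z : EuclideanSpace ℝ (Fin 2),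
      z 0 * z 1 = 2 * π * (k : ℝ) * ℏ ∧ ‖z‖ = Real.sqrt (4 * π * |(k : ℝ)| * ℏ) := by
    intro k hk
    set s := Real.sqrt (2 * π * |(k:ℝ)| * ℏ) with hs
    have hsnn : 0 ≤ 2 * π * |(k:ℝ)| * ℏ := by positivity
    have hs2 : s ^ 2 = 2 * π * |(k:ℝ)| * ℏ := Real.sq_sqrt hsnn
    obtain ⟨z, h0, h1, hn⟩ := aux_pt s ((Int.sign k : ℝ) * s)
    have hsk : (Int.sign k : ℝ) * |(k:ℝ)| = (k : ℝ) := by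
      rw [← Int.cast_abs, ← Int.cast_mul, Int.sign_mul_abs]
    have hsign : ((Int.sign k : ℝ))^2 = 1 := by
      rcases hk.lt_or_gt with h | h
      · rw [Int.sign_eq_neg_one_of_neg h]; norm_num
      · rw [Int.sign_eq_one_of_pos h]; norm_num
    refine ⟨z, ?_, ?_⟩
    · rw [h0, h1]
      have e1 : s * ((Int.sign k : ℝ) * s) = (Int.sign k : ℝ) * s^2 := by ring
      rw [e1, hs2]
      calc (Int.sign k : ℝ) * (2 * π * |(k:ℝ)| * ℏ)
          = 2 * π * ((Int.sign k : ℝ) * |(k:ℝ)|) * ℏ := by ring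
        _ = 2 * π * (k:ℝ) * ℏ := by rw [hsk]
    · rw [hn]
      congr 1
      have e2 : s ^ 2 + ((Int.sign k : ℝ) * s)^2 = 2 * s^2 := by nlinarith [hsign]
      rw [e2, hs2]; ring
  constructor
  · intro k hk
    obtain ⟨z, hz, hn⟩ := mem k hk
    exact aux_infDist _ _ ⟨z, hz, hn⟩ (fun y hy => key k hk y hy)
  · obtain ⟨z, hz, hn⟩ := mem 1 one_ne_zero
    apply aux_infDist
    · refine ⟨z, ⟨1, one_ne_zero, hz⟩, ?_⟩
      rw [hn]; norm_num
    · rintro y ⟨k, hk, hy⟩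
      have h1 : Real.sqrt (4 * π * ℏ) ≤ Real.sqrt (4 * π * |(k:ℝ)| * ℏ) := by
        apply Real.sqrt_le_sqrt
        have : (1:ℝ) ≤ |(k:ℝ)| := by
          rw [← Int.cast_abs]; exact_mod_cast Int.one_le_abs hk
        nlinarith [mul_pos hpi hℏ]
      exact h1.trans (key k hk y hy)
end

section
/- There exists a constant C₀ > 0 such that for all t ∈ ℝ, |sinc(t/(2ℏ))| ≥ C₀ (1 + |t|)⁻¹ · dist(t, Z₀), where Z₀ = {2πkℏ : k ∈ ℤ, k ≠ 0} and sinc(s) = sin s / s (with sinc(0) = 1). -/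
/-!
Write `x = t / (2ℏ)` and let `kπ` be the multiple of `π` nearest to `x`. Jordan's inequality
applied to `x - kπ` gives `|sin x| ≥ (2/π) |x - kπ|`, and `2ℏ |x - kπ|` bounds the distance from
`t` to the zero set `Z₀`. If `|t| > πℏ` then `k ≠ 0`, so dividing by `|x| = |t| / (2ℏ)` gives the
bound with the factor `|t|⁻¹ ≥ (1 + |t|)⁻¹`. If `|t| ≤ πℏ`, Jordan's inequality gives
`|sinc x| ≥ 2/π`, while the distance to `Z₀` is at most `3πℏ`.
-/

open Real Metric

noncomputable def sinc (t : ℝ) : ℝ := if t = 0 then 1 else Real.sin t / t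

lemma sinc_eq_real_sinc : _root_.sinc = Real.sinc := rfl

def sincZeros (ℏ : ℝ) : Set ℝ := {s : ℝ | ∃ k : ℤ, k ≠ 0 ∧ s = 2 * π * (k : ℝ) * ℏ}

lemma infDist_sincZeros_le (ℏ t : ℝ) {k : ℤ} (hk : k ≠ 0) :
    infDist t (sincZeros ℏ) ≤ |t - 2 * π * k * ℏ| :=
  infDist_le_dist_of_mem ⟨k, hk, rfl⟩

lemma Real.mul_abs_sub_round_le_abs_sin (x : ℝ) :
    2 / π * |x - round (x / π) * π| ≤ |sin x| := by
  have hnear : |x - round (x / π) * π| ≤ π / 2 := by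
    have h := mul_le_mul_of_nonneg_left (abs_sub_round (x / π)) pi_pos.le
    rwa [← abs_of_pos pi_pos, ← abs_mul, abs_of_pos pi_pos, mul_sub,
      mul_div_cancel₀ _ pi_pos.ne', mul_comm π, mul_one_div] at h
  calc 2 / π * |x - round (x / π) * π| ≤ |sin (x - round (x / π) * π)| :=
        mul_abs_le_abs_sin hnear
    _ = |sin x| := by rw [sin_sub_int_mul_pi, abs_mul, abs_neg_one_zpow, one_mul]

lemma Real.two_div_pi_le_abs_sinc {x : ℝ} (hx : |x| ≤ π / 2) : 2 / π ≤ |Real.sinc x| := by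
  rcases eq_or_ne x 0 with rfl | hx0
  · rw [sinc_zero, abs_one, div_le_one pi_pos]
    linarith [two_le_pi]
  · rw [sinc_of_ne_zero hx0, abs_div, le_div_iff₀ (abs_pos.2 hx0)]
    exact mul_abs_le_abs_sin hx

section

variable {ℏ t : ℝ}

lemma sinc_lower_bound_of_abs_le (hℏ : 0 < ℏ) (ht : |t| ≤ π * ℏ) :
    2 / (3 * π ^ 2 * ℏ) * (1 + |t|)⁻¹ * infDist t (sincZeros ℏ) ≤
      |_root_.sinc (t / (2 * ℏ))| := by
  have hdist : infDist t (sincZeros ℏ) ≤ 3 * π * ℏ := by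
    refine (infDist_sincZeros_le ℏ t one_ne_zero).trans ?_
    rw [Int.cast_one, mul_one]
    calc |t - 2 * π * ℏ| ≤ |t| + |2 * π * ℏ| := abs_sub _ _
      _ = |t| + 2 * π * ℏ := by rw [abs_of_pos (by positivity : (0 : ℝ) < 2 * π * ℏ)]
      _ ≤ 3 * π * ℏ := by linarith
  have hx : |t / (2 * ℏ)| ≤ π / 2 := by
    rw [abs_div, abs_of_pos (by positivity : (0 : ℝ) < 2 * ℏ), div_le_iff₀ (by positivity)]
    linarith
  have hinv : (1 + |t|)⁻¹ ≤ 1 := inv_le_one_of_one_le₀ (by linarith [abs_nonneg t])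
  calc 2 / (3 * π ^ 2 * ℏ) * (1 + |t|)⁻¹ * infDist t (sincZeros ℏ)
      ≤ 2 / (3 * π ^ 2 * ℏ) * 1 * (3 * π * ℏ) := by gcongr; exact infDist_nonneg
    _ = 2 / π := by field_simp
    _ ≤ |_root_.sinc (t / (2 * ℏ))| := two_div_pi_le_abs_sinc hx

lemma sinc_lower_bound_of_lt_abs (hℏ : 0 < ℏ) (ht : π * ℏ < |t|) :
    2 / π * (1 + |t|)⁻¹ * infDist t (sincZeros ℏ) ≤ |_root_.sinc (t / (2 * ℏ))| := by
  set x := t / (2 * ℏ) with hx_def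
  set k := round (x / π)
  have htpos : 0 < |t| := lt_trans (by positivity) ht
  have hx : |x| = |t| / (2 * ℏ) := by rw [abs_div, abs_of_pos (by positivity : (0 : ℝ) < 2 * ℏ)]
  have hk : k ≠ 0 := by
    intro hk0
    have hround : |x / π - k| ≤ 1 / 2 := abs_sub_round _
    rw [hk0, Int.cast_zero, sub_zero, abs_div, abs_of_pos pi_pos, hx, div_div,
      div_le_iff₀ (by positivity)] at hround
    linarith
  have hdist : infDist t (sincZeros ℏ) ≤ 2 * ℏ * |x - k * π| := by
    refine (infDist_sincZeros_le ℏ t hk).trans_eq ?_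
    rw [← abs_of_pos (by positivity : (0 : ℝ) < 2 * ℏ), ← abs_mul, hx_def]
    congr 1
    field_simp
  have hsinc : |_root_.sinc x| = 2 * ℏ * |sin x| / |t| := by
    rw [sinc_eq_real_sinc, sinc_of_ne_zero (abs_pos.1 (by rw [hx]; positivity)), abs_div, hx]
    field_simp
  calc 2 / π * (1 + |t|)⁻¹ * infDist t (sincZeros ℏ)
      ≤ 2 / π * |t|⁻¹ * (2 * ℏ * |x - k * π|) := by
        gcongr
        · exact infDist_nonneg
        · linarith
    _ = 2 * ℏ * (2 / π * |x - k * π|) / |t| := by ring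
    _ ≤ 2 * ℏ * |sin x| / |t| := by gcongr; exact mul_abs_sub_round_le_abs_sin x
    _ = |_root_.sinc x| := hsinc.symm

end

theorem sinc_lower_bound (ℏ : ℝ) (hℏ : 0 < ℏ) :
    ∃ C₀ > 0, ∀ t : ℝ,
      |_root_.sinc (t / (2 * ℏ))| ≥
        C₀ * (1 + |t|)⁻¹ * Metric.infDist t {s : ℝ | ∃ k : ℤ, k ≠ 0 ∧ s = 2 * π * (k : ℝ) * ℏ} := by
  refine ⟨min (2 / π) (2 / (3 * π ^ 2 * ℏ)), lt_min (by positivity) (by positivity), fun t => ?_⟩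
  show _ * _ * infDist t (sincZeros ℏ) ≤ |_root_.sinc (t / (2 * ℏ))|
  rcases le_or_gt |t| (π * ℏ) with ht | ht
  · refine le_trans ?_ (sinc_lower_bound_of_abs_le hℏ ht)
    gcongr
    exacts [infDist_nonneg, min_le_right _ _]
  · refine le_trans ?_ (sinc_lower_bound_of_lt_abs hℏ ht)
    gcongr
    exacts [infDist_nonneg, min_le_left _ _]
end

section
/- For nonnegative integers r, s and ℓ ranging over 0 ≤ ℓ ≤ s, the two symmetrization formulas agree: (1/(s+1)) Σ_{ℓ=0}^{s} p̂^{s−ℓ} x̂^r p̂^ℓ = (1/(r+1)) Σ_{ℓ=0}^{r} x̂^ℓ p̂^s x̂^{r−ℓ}, as operators on smooth functions ℝ → ℂ, where x̂ is multiplication by x and p̂ = −iℏ d/dx. -/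
/-- Multiplication operator `x̂`. -/
def Xop : (ℝ → ℂ) → (ℝ → ℂ) := fun ψ x => x * ψ x

/-- Momentum operator `p̂ = −iℏ d/dx`. -/
noncomputable def Pop (ℏ : ℝ) : (ℝ → ℂ) → (ℝ → ℂ) := fun ψ x => -Complex.I * ℏ * deriv ψ x

open Finset

lemma hockey (n k : ℕ) : ∑ j ∈ range (n+1), (j.choose k) = (n+1).choose (k+1) := by
  induction n with
  | zero =>
    cases k with
    | zero => simp
    | succ m => simp [Nat.choose_eq_zero_of_lt (by omega : 1 < m+2)]
  | succ n ih => rw [Finset.sum_range_succ, ih, Nat.choose_succ_succ (n+1) k, Nat.add_comm]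

lemma xop_iter (r : ℕ) (ψ : ℝ → ℂ) (x : ℝ) : Xop^[r] ψ x = (x:ℂ)^r * ψ x := by
  induction r with
  | zero => simp
  | succ n ih =>
    rw [Function.iterate_succ_apply']
    show (x:ℂ) * Xop^[n] ψ x = _
    rw [ih, pow_succ]; ring

lemma smooth_iter {ψ : ℝ → ℂ} (hψ : ContDiff ℝ (⊤ : ℕ∞) ψ) (n : ℕ) :
    ContDiff ℝ (⊤ : ℕ∞) (iteratedDeriv n ψ) := by
  rw [iteratedDeriv_eq_iterate]; exact ContDiff.iterate_deriv n hψ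

lemma diff_iter {ψ : ℝ → ℂ} (hψ : ContDiff ℝ (⊤ : ℕ∞) ψ) (n : ℕ) :
    Differentiable ℝ (iteratedDeriv n ψ) :=
  (smooth_iter hψ n).differentiable (by simp)

lemma hasDerivAt_pow_ofReal (x : ℝ) (e : ℕ) :
    HasDerivAt (fun y : ℝ => (y:ℂ)^e) (e * (x:ℂ)^(e-1)) x :=
  (hasDerivAt_pow e ((x:ℝ):ℂ)).comp_ofReal

lemma pop_iter (ℏ : ℝ) {ψ : ℝ → ℂ} (hψ : ContDiff ℝ (⊤ : ℕ∞) ψ) (m : ℕ) :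
    (Pop ℏ)^[m] ψ = fun x => (-Complex.I * ℏ)^m * iteratedDeriv m ψ x := by
  induction m with
  | zero => simp
  | succ n ih =>
    rw [Function.iterate_succ_apply', ih]
    funext x
    have hd : DifferentiableAt ℝ (iteratedDeriv n ψ) x := diff_iter hψ n x
    simp only [Pop, deriv_const_mul _ hd, ← iteratedDeriv_succ]
    ring

lemma pascal_sum (n : ℕ) (f : ℕ → ℂ) :
    ∑ j ∈ range (n+2), ((n+1).choose j : ℂ) * f j
      = ∑ j ∈ range (n+1), (n.choose j : ℂ) * f j
        + ∑ j ∈ range (n+1), (n.choose j : ℂ) * f (j+1) := by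
  rw [Finset.sum_range_succ' _ (n+1)]
  have h1 : ∀ j, ((n+1).choose (j+1) : ℂ) = (n.choose j : ℂ) + (n.choose (j+1) : ℂ) := by
    intro j; rw [Nat.choose_succ_succ]; push_cast; ring
  simp only [h1, add_mul]
  rw [Finset.sum_add_distrib]
  have h2 : ∑ j ∈ range (n+1), (n.choose (j+1) : ℂ) * f (j+1)
      = ∑ j ∈ range (n+1), (n.choose j : ℂ) * f j - (n.choose 0 : ℂ) * f 0 := by
    have e1 := Finset.sum_range_succ' (fun j => (n.choose j : ℂ) * f j) (n+1)
    have e2 := Finset.sum_range_succ (fun j => (n.choose j : ℂ) * f j) (n+1)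
    simp only [Nat.choose_succ_self, Nat.cast_zero, zero_mul, add_zero] at e2
    rw [e2] at e1
    simp only [e1]; ring
  rw [h2]; simp only [Nat.choose_zero_right, Nat.cast_one]; ring

lemma leibniz (m : ℕ) {ψ : ℝ → ℂ} (hψ : ContDiff ℝ (⊤ : ℕ∞) ψ) (a : ℕ) :
    iteratedDeriv a (fun y : ℝ => (y:ℂ)^m * ψ y)
      = fun x : ℝ => ∑ k ∈ range (a+1), (a.choose k : ℂ) * (m.descFactorial k : ℂ)
          * (x:ℂ)^(m-k) * iteratedDeriv (a-k) ψ x := by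
  induction a with
  | zero => funext x; simp
  | succ a ih =>
    rw [iteratedDeriv_succ, ih]
    funext x
    have hterm : ∀ k ∈ range (a+1), HasDerivAt
        (fun x : ℝ => (a.choose k : ℂ) * (m.descFactorial k : ℂ) * (x:ℂ)^(m-k)
          * iteratedDeriv (a-k) ψ x)
        ((a.choose k : ℂ) * (m.descFactorial k : ℂ) *
          (((m-k : ℕ):ℂ) * (x:ℂ)^(m-k-1) * iteratedDeriv (a-k) ψ x
            + (x:ℂ)^(m-k) * iteratedDeriv (a-k+1) ψ x)) x := by
      intro k _
      have h1 : HasDerivAt (fun x:ℝ => (x:ℂ)^(m-k)) (((m-k:ℕ):ℂ) * (x:ℂ)^(m-k-1)) x :=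
        hasDerivAt_pow_ofReal x (m-k)
      have h2 : HasDerivAt (iteratedDeriv (a-k) ψ) (iteratedDeriv (a-k+1) ψ x) x := by
        have h := (diff_iter hψ (a-k) x).hasDerivAt
        rwa [← iteratedDeriv_succ] at h
      have h3 := (h1.const_mul ((a.choose k : ℂ) * (m.descFactorial k : ℂ))).fun_mul h2
      refine h3.congr_deriv ?_
      ring
    rw [(HasDerivAt.fun_sum hterm).deriv]
    set T : ℕ → ℂ := fun j => (m.descFactorial j : ℂ) * (x:ℂ)^(m-j)
        * iteratedDeriv (a+1-j) ψ x with hTdef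
    have hR : ∑ k ∈ range (a+2), ((a+1).choose k : ℂ) * (m.descFactorial k :ℂ)
          * (x:ℂ)^(m-k) * iteratedDeriv (a+1-k) ψ x
        = ∑ j ∈ range (a+1), (a.choose j : ℂ) * T j
          + ∑ j ∈ range (a+1), (a.choose j : ℂ) * T (j+1) := by
      rw [← pascal_sum a T]
      apply Finset.sum_congr rfl
      intro k _; simp only [hTdef]; ring
    rw [hR, ← Finset.sum_add_distrib]
    apply Finset.sum_congr rfl
    intro k hk
    have hka : k ≤ a := Nat.lt_succ_iff.mp (Finset.mem_range.mp hk)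
    have e1 : a + 1 - k = (a - k) + 1 := Nat.succ_sub hka
    have e2 : m - (k+1) = m - k - 1 := by omega
    have e3 : a + 1 - (k+1) = a - k := by omega
    simp only [hTdef, Nat.descFactorial_succ, e1, e2, e3]
    push_cast
    ring

lemma iter_iter (ψ : ℝ → ℂ) (n ℓ : ℕ) :
    iteratedDeriv n (iteratedDeriv ℓ ψ) = iteratedDeriv (n + ℓ) ψ := by
  induction n with
  | zero => simp
  | succ n ih => rw [iteratedDeriv_succ, ih, ← iteratedDeriv_succ, Nat.add_right_comm]

lemma iter_const_mul {ψ : ℝ → ℂ} (h : ContDiff ℝ (⊤ : ℕ∞) ψ) (c : ℂ) (n : ℕ) :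
    iteratedDeriv n (fun y => c * ψ y) = fun y => c * iteratedDeriv n ψ y := by
  induction n with
  | zero => simp
  | succ n ih =>
    rw [iteratedDeriv_succ, ih]
    funext y
    rw [deriv_const_mul _ (diff_iter h n y), ← iteratedDeriv_succ]

lemma smooth_pow_mul {ψ : ℝ → ℂ} (h : ContDiff ℝ (⊤ : ℕ∞) ψ) (m : ℕ) :
    ContDiff ℝ (⊤ : ℕ∞) (fun y : ℝ => (y:ℂ)^m * ψ y) :=
  (Complex.ofRealCLM.contDiff.pow m).mul h

lemma lhs_term (ℏ : ℝ) {ψ : ℝ → ℂ} (hψ : ContDiff ℝ (⊤ : ℕ∞) ψ) (r s ℓ : ℕ)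
    (hℓ : ℓ ≤ s) (x : ℝ) :
    (Pop ℏ)^[s-ℓ] (Xop^[r] ((Pop ℏ)^[ℓ] ψ)) x
      = (-Complex.I * ℏ)^s * ∑ k ∈ range (s+1),
          ((s-ℓ).choose k : ℂ) * (r.descFactorial k : ℂ) * (x:ℂ)^(r-k)
            * iteratedDeriv (s-k) ψ x := by
  have hDℓ : ContDiff ℝ (⊤ : ℕ∞) (iteratedDeriv ℓ ψ) := smooth_iter hψ ℓ
  have hg : ContDiff ℝ (⊤ : ℕ∞) (fun y : ℝ => (y:ℂ)^r * iteratedDeriv ℓ ψ y) :=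
    smooth_pow_mul hDℓ r
  have e1 : Xop^[r] ((Pop ℏ)^[ℓ] ψ)
      = fun y : ℝ => (-Complex.I * ℏ)^ℓ * ((y:ℂ)^r * iteratedDeriv ℓ ψ y) := by
    funext y
    rw [xop_iter, pop_iter ℏ hψ ℓ]
    ring
  have e2 : (Pop ℏ)^[s-ℓ]
        (fun y : ℝ => (-Complex.I * ℏ)^ℓ * ((y:ℂ)^r * iteratedDeriv ℓ ψ y)) x
      = (-Complex.I * ℏ)^(s-ℓ) * iteratedDeriv (s-ℓ)
          (fun y : ℝ => (-Complex.I * ℏ)^ℓ * ((y:ℂ)^r * iteratedDeriv ℓ ψ y)) x :=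
    congrFun (pop_iter ℏ (contDiff_const.mul hg) (s-ℓ)) x
  have e3 : iteratedDeriv (s-ℓ)
        (fun y : ℝ => (-Complex.I * ℏ)^ℓ * ((y:ℂ)^r * iteratedDeriv ℓ ψ y)) x
      = (-Complex.I * ℏ)^ℓ * iteratedDeriv (s-ℓ)
          (fun y : ℝ => (y:ℂ)^r * iteratedDeriv ℓ ψ y) x :=
    congrFun (iter_const_mul hg _ (s-ℓ)) x
  have e4 : iteratedDeriv (s-ℓ) (fun y : ℝ => (y:ℂ)^r * iteratedDeriv ℓ ψ y) x
      = ∑ k ∈ range (s-ℓ+1), ((s-ℓ).choose k : ℂ) * (r.descFactorial k : ℂ)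
          * (x:ℂ)^(r-k) * iteratedDeriv (s-ℓ-k) (iteratedDeriv ℓ ψ) x :=
    congrFun (leibniz r hDℓ (s-ℓ)) x
  rw [e1, e2, e3, e4]
  have e5 : ∑ k ∈ range (s-ℓ+1), ((s-ℓ).choose k : ℂ) * (r.descFactorial k : ℂ)
          * (x:ℂ)^(r-k) * iteratedDeriv (s-ℓ-k) (iteratedDeriv ℓ ψ) x
      = ∑ k ∈ range (s+1), ((s-ℓ).choose k : ℂ) * (r.descFactorial k : ℂ)
          * (x:ℂ)^(r-k) * iteratedDeriv (s-k) ψ x := by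
    have step1 : ∑ k ∈ range (s-ℓ+1), ((s-ℓ).choose k : ℂ) * (r.descFactorial k : ℂ)
          * (x:ℂ)^(r-k) * iteratedDeriv (s-ℓ-k) (iteratedDeriv ℓ ψ) x
        = ∑ k ∈ range (s-ℓ+1), ((s-ℓ).choose k : ℂ) * (r.descFactorial k : ℂ)
          * (x:ℂ)^(r-k) * iteratedDeriv (s-k) ψ x := by
      apply Finset.sum_congr rfl
      intro k hk
      have hk' : k ≤ s - ℓ := Nat.lt_succ_iff.mp (Finset.mem_range.mp hk)
      rw [iter_iter]
      congr 2
      omega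
    rw [step1]
    apply Finset.sum_subset (Finset.range_subset_range.mpr (by omega))
    intro k _ hk
    have : s - ℓ < k := by
      simp only [Finset.mem_range, not_lt] at hk
      omega
    rw [Nat.choose_eq_zero_of_lt this]
    simp
  rw [e5, ← mul_assoc, ← pow_add]
  congr 2
  omega

lemma rhs_term (ℏ : ℝ) {ψ : ℝ → ℂ} (hψ : ContDiff ℝ (⊤ : ℕ∞) ψ) (r s ℓ : ℕ)
    (hℓ : ℓ ≤ r) (x : ℝ) :
    Xop^[ℓ] ((Pop ℏ)^[s] (Xop^[r-ℓ] ψ)) x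
      = (-Complex.I * ℏ)^s * ∑ k ∈ range (s+1),
          (s.choose k : ℂ) * ((r-ℓ).descFactorial k : ℂ) * (x:ℂ)^(r-k)
            * iteratedDeriv (s-k) ψ x := by
  have e0 : Xop^[r-ℓ] ψ = fun y : ℝ => (y:ℂ)^(r-ℓ) * ψ y := by
    funext y; exact xop_iter (r-ℓ) ψ y
  have e1 : (Pop ℏ)^[s] (fun y : ℝ => (y:ℂ)^(r-ℓ) * ψ y) x
      = (-Complex.I * ℏ)^s * iteratedDeriv s (fun y : ℝ => (y:ℂ)^(r-ℓ) * ψ y) x :=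
    congrFun (pop_iter ℏ (smooth_pow_mul hψ (r-ℓ)) s) x
  have e2 : iteratedDeriv s (fun y : ℝ => (y:ℂ)^(r-ℓ) * ψ y) x
      = ∑ k ∈ range (s+1), (s.choose k : ℂ) * ((r-ℓ).descFactorial k : ℂ)
          * (x:ℂ)^(r-ℓ-k) * iteratedDeriv (s-k) ψ x :=
    congrFun (leibniz (r-ℓ) hψ s) x
  rw [xop_iter ℓ, e0, e1, e2, Finset.mul_sum, Finset.mul_sum, Finset.mul_sum]
  apply Finset.sum_congr rfl
  intro k _
  by_cases hkr : k ≤ r - ℓ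
  · have hx : ℓ + (r - ℓ - k) = r - k := by omega
    rw [← hx, pow_add]
    ring
  · have hz : (r-ℓ).descFactorial k = 0 :=
      Nat.descFactorial_eq_zero_iff_lt.mpr (by omega)
    rw [hz]
    push_cast
    ring

lemma key_coeff (r s k : ℕ) :
    (1/((s:ℂ)+1)) * (((s+1).choose (k+1) : ℕ) : ℂ) * ((r.descFactorial k : ℕ) : ℂ)
      = (1/((r:ℂ)+1)) * ((s.choose k : ℕ) : ℂ)
          * (((k.factorial * ((r+1).choose (k+1)) : ℕ)) : ℂ) := by
  have hs : ((s:ℂ)+1) ≠ 0 := Nat.cast_add_one_ne_zero s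
  have hr : ((r:ℂ)+1) ≠ 0 := Nat.cast_add_one_ne_zero r
  have h2 : ((r:ℂ)+1) * (r.choose k : ℕ) = (((r+1).choose (k+1) : ℕ) : ℂ) * ((k:ℂ)+1) := by
    have h := Nat.add_one_mul_choose_eq r k
    exact_mod_cast h
  have h3 : ((s:ℂ)+1) * (s.choose k : ℕ) = (((s+1).choose (k+1) : ℕ) : ℂ) * ((k:ℂ)+1) := by
    have h := Nat.add_one_mul_choose_eq s k
    exact_mod_cast h
  rw [Nat.descFactorial_eq_factorial_mul_choose]
  push_cast
  field_simp
  push_cast at h2 h3 ⊢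
  linear_combination ((k.factorial : ℂ)) * (((s+1).choose (k+1) : ℕ) : ℂ) * h2
    - ((k.factorial : ℂ)) * (((r+1).choose (k+1) : ℕ) : ℂ) * h3

theorem bj_symmetrizations_agree (ℏ : ℝ) (hℏ : 0 < ℏ) (r s : ℕ)
    (ψ : ℝ → ℂ) (hψ : ContDiff ℝ (⊤ : ℕ∞) ψ) (x : ℝ) :
    (1 / (s + 1) : ℂ) * ∑ ℓ ∈ Finset.range (s + 1),
        (Pop ℏ)^[s - ℓ] (Xop^[r] ((Pop ℏ)^[ℓ] ψ)) x
      = (1 / (r + 1) : ℂ) * ∑ ℓ ∈ Finset.range (r + 1),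
        Xop^[ℓ] ((Pop ℏ)^[s] (Xop^[r - ℓ] ψ)) x := by
  have hpsi : ContDiff ℝ (⊤ : ℕ∞) ψ := hψ.of_le (by simp)
  have hL : ∑ ℓ ∈ range (s+1), (Pop ℏ)^[s-ℓ] (Xop^[r] ((Pop ℏ)^[ℓ] ψ)) x
      = (-Complex.I * ℏ)^s * ∑ k ∈ range (s+1),
          (((s+1).choose (k+1) : ℕ) : ℂ) * (r.descFactorial k : ℂ) * (x:ℂ)^(r-k)
            * iteratedDeriv (s-k) ψ x := by
    rw [Finset.sum_congr rfl (fun ℓ hℓ =>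
      lhs_term ℏ hpsi r s ℓ (Nat.lt_succ_iff.mp (Finset.mem_range.mp hℓ)) x)]
    rw [← Finset.mul_sum]
    congr 1
    rw [Finset.sum_comm]
    apply Finset.sum_congr rfl
    intro k _
    have hre : ∀ ℓ ∈ range (s+1), ((s-ℓ).choose k : ℂ) * (r.descFactorial k : ℂ)
          * (x:ℂ)^(r-k) * iteratedDeriv (s-k) ψ x
        = ((s-ℓ).choose k : ℂ)
          * ((r.descFactorial k : ℂ) * (x:ℂ)^(r-k) * iteratedDeriv (s-k) ψ x) := by
      intros; ring
    rw [Finset.sum_congr rfl hre, ← Finset.sum_mul]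
    have hsum : ∑ ℓ ∈ range (s+1), ((s-ℓ).choose k : ℂ)
        = (((s+1).choose (k+1) : ℕ) : ℂ) := by
      rw [← Nat.cast_sum]
      congr 1
      have h := Finset.sum_range_reflect (fun j => j.choose k) (s+1)
      simp only [Nat.add_sub_cancel] at h
      rw [h, hockey]
    rw [hsum]; ring
  have hR : ∑ ℓ ∈ range (r+1), Xop^[ℓ] ((Pop ℏ)^[s] (Xop^[r-ℓ] ψ)) x
      = (-Complex.I * ℏ)^s * ∑ k ∈ range (s+1),
          ((s.choose k : ℕ) : ℂ) * (((k.factorial * ((r+1).choose (k+1)) : ℕ)) : ℂ)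
            * (x:ℂ)^(r-k) * iteratedDeriv (s-k) ψ x := by
    rw [Finset.sum_congr rfl (fun ℓ hℓ =>
      rhs_term ℏ hpsi r s ℓ (Nat.lt_succ_iff.mp (Finset.mem_range.mp hℓ)) x)]
    rw [← Finset.mul_sum]
    congr 1
    rw [Finset.sum_comm]
    apply Finset.sum_congr rfl
    intro k _
    have hre : ∀ ℓ ∈ range (r+1), (s.choose k : ℂ) * ((r-ℓ).descFactorial k : ℂ)
          * (x:ℂ)^(r-k) * iteratedDeriv (s-k) ψ x
        = ((r-ℓ).descFactorial k : ℂ)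
          * ((s.choose k : ℂ) * (x:ℂ)^(r-k) * iteratedDeriv (s-k) ψ x) := by
      intros; ring
    rw [Finset.sum_congr rfl hre, ← Finset.sum_mul]
    have hdsum : ∑ ℓ ∈ range (r+1), ((r-ℓ).descFactorial k : ℂ)
        = (((k.factorial * ((r+1).choose (k+1)) : ℕ)) : ℂ) := by
      rw [← Nat.cast_sum]
      congr 1
      have h := Finset.sum_range_reflect (fun j => j.descFactorial k) (r+1)
      simp only [Nat.add_sub_cancel] at h
      rw [h]
      have h2 : ∀ j ∈ range (r+1), j.descFactorial k = k.factorial * j.choose k :=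
        fun j _ => Nat.descFactorial_eq_factorial_mul_choose j k
      rw [Finset.sum_congr rfl h2, ← Finset.mul_sum, hockey]
    rw [hdsum]; ring
  rw [hL, hR, Finset.mul_sum, Finset.mul_sum, Finset.mul_sum, Finset.mul_sum]
  apply Finset.sum_congr rfl
  intro k _
  have hkey := key_coeff r s k
  linear_combination ((-Complex.I * ℏ)^s * (x:ℂ)^(r-k) * iteratedDeriv (s-k) ψ x) * hkey
end

section
/- Born-Jordan quantization of x^r p^s, Op_BJ(x^r p^s) = (1/(s+1)) Σ_{ℓ=0}^s p̂^{s−ℓ}x̂^r p̂^ℓ, can be written in normally ordered form as Σ_{ℓ=0}^{min(r,s)} (−iℏ)^ℓ C(s,ℓ) C(r,ℓ) (ℓ!/(ℓ+1)) x̂^{r−ℓ} p̂^{s−ℓ}. -/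
lemma smooth_deriv {ψ : ℝ → ℂ} (h : ContDiff ℝ (⊤ : ℕ∞) ψ) : ContDiff ℝ (⊤ : ℕ∞) (deriv ψ) := by
  have h' : ContDiff ℝ (((⊤ : ℕ∞) : WithTop ℕ∞) + 1) ψ := by
    exact h.of_le (by exact_mod_cast le_top)
  exact (contDiff_succ_iff_deriv.mp h').2.2

lemma Pop_contDiff (ℏ : ℝ) {ψ : ℝ → ℂ} (h : ContDiff ℝ (⊤ : ℕ∞) ψ) : ContDiff ℝ (⊤ : ℕ∞) (Pop ℏ ψ) :=
  contDiff_const.mul (smooth_deriv h)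

lemma Pop_iter_contDiff (ℏ : ℝ) (k : ℕ) {ψ : ℝ → ℂ} (h : ContDiff ℝ (⊤ : ℕ∞) ψ) :
    ContDiff ℝ (⊤ : ℕ∞) ((Pop ℏ)^[k] ψ) := by
  induction k with
  | zero => simpa using h
  | succ k ih => rw [Function.iterate_succ_apply']; exact Pop_contDiff ℏ ih

lemma Xop_iter (r : ℕ) (φ : ℝ → ℂ) (x : ℝ) : Xop^[r] φ x = (x : ℂ) ^ r * φ x := by
  induction r with
  | zero => simp
  | succ r ih =>
    rw [Function.iterate_succ_apply']
    simp only [Xop, ih, pow_succ]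
    ring

lemma deriv_term (c : ℂ) (m : ℕ) (g : ℝ → ℂ) (x : ℝ) (hg : DifferentiableAt ℝ g x) :
    deriv (fun y : ℝ => c * (y : ℂ) ^ m * g y) x
      = c * (m : ℂ) * (x : ℂ) ^ (m - 1) * g x + c * (x : ℂ) ^ m * deriv g x := by
  have hpow : HasDerivAt (fun y : ℝ => (y : ℂ) ^ m) ((m : ℂ) * (x : ℂ) ^ (m - 1)) x :=
    (hasDerivAt_pow m ((x : ℝ) : ℂ)).comp_ofReal
  have hcp : HasDerivAt (fun y : ℝ => c * (y : ℂ) ^ m)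
      (c * ((m : ℂ) * (x : ℂ) ^ (m - 1))) x := hpow.const_mul c
  have hprod := hcp.mul hg.hasDerivAt
  rw [show (fun y : ℝ => c * (y : ℂ) ^ m * g y) = ((fun y : ℝ => c * (y : ℂ) ^ m) * g) from rfl, hprod.deriv]
  rw [hg.hasDerivAt.deriv]
  ring

lemma key (ℏ : ℝ) (r : ℕ) : ∀ (k : ℕ) (φ : ℝ → ℂ), ContDiff ℝ (⊤ : ℕ∞) φ → ∀ x : ℝ,
    (Pop ℏ)^[k] (Xop^[r] φ) x = ∑ j ∈ Finset.range (k + 1),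
      (-Complex.I * ℏ) ^ j * (k.choose j : ℂ) * (r.descFactorial j : ℂ) * (x : ℂ) ^ (r - j)
        * (Pop ℏ)^[k - j] φ x := by
  intro k
  induction k with
  | zero => intro φ hφ x; simp [Xop_iter]
  | succ k ih =>
    intro φ hφ x
    have hfun : (Pop ℏ)^[k] (Xop^[r] φ) = fun y : ℝ =>
        ∑ j ∈ Finset.range (k + 1),
          ((-Complex.I * ℏ) ^ j * (k.choose j : ℂ) * (r.descFactorial j : ℂ))
            * (y : ℂ) ^ (r - j) * (Pop ℏ)^[k - j] φ y := by
      funext y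
      rw [ih φ hφ y]
    have hgdiff : ∀ j : ℕ, Differentiable ℝ ((Pop ℏ)^[k - j] φ) := fun j =>
      (Pop_iter_contDiff ℏ (k - j) hφ).differentiable (by simp)
    have hterm : ∀ j : ℕ, ∀ y : ℝ, DifferentiableAt ℝ
        (fun t : ℝ => ((-Complex.I * ℏ) ^ j * (k.choose j : ℂ) * (r.descFactorial j : ℂ))
          * (t : ℂ) ^ (r - j) * (Pop ℏ)^[k - j] φ t) y := by
      intro j y
      exact ((((hasDerivAt_pow (r - j) ((y : ℝ) : ℂ)).comp_ofReal).differentiableAt.const_mul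
        _).mul ((hgdiff j) y))
    rw [Function.iterate_succ_apply', hfun]
    show -Complex.I * ℏ * deriv (fun y : ℝ => ∑ j ∈ Finset.range (k + 1),
        ((-Complex.I * ℏ) ^ j * (k.choose j : ℂ) * (r.descFactorial j : ℂ))
          * (y : ℂ) ^ (r - j) * (Pop ℏ)^[k - j] φ y) x = _
    rw [deriv_fun_sum (fun j _ => hterm j x)]
    have hderiv : ∀ j ∈ Finset.range (k + 1),
        deriv (fun t : ℝ => ((-Complex.I * ℏ) ^ j * (k.choose j : ℂ) * (r.descFactorial j : ℂ))
          * (t : ℂ) ^ (r - j) * (Pop ℏ)^[k - j] φ t) x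
        = ((-Complex.I * ℏ) ^ j * (k.choose j : ℂ) * (r.descFactorial j : ℂ)) * ((r - j : ℕ) : ℂ)
            * (x : ℂ) ^ (r - j - 1) * (Pop ℏ)^[k - j] φ x
          + ((-Complex.I * ℏ) ^ j * (k.choose j : ℂ) * (r.descFactorial j : ℂ))
            * (x : ℂ) ^ (r - j) * deriv ((Pop ℏ)^[k - j] φ) x := fun j _ =>
      deriv_term _ (r - j) _ x ((hgdiff j) x)
    rw [Finset.sum_congr rfl hderiv, Finset.mul_sum]
    -- abbreviations
    set c : ℂ := -Complex.I * ℏ with hc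
    -- Define A, B, E, F
    have step : ∀ j ∈ Finset.range (k + 1),
        c * (c ^ j * (k.choose j : ℂ) * (r.descFactorial j : ℂ) * ((r - j : ℕ) : ℂ)
            * (x : ℂ) ^ (r - j - 1) * (Pop ℏ)^[k - j] φ x
          + c ^ j * (k.choose j : ℂ) * (r.descFactorial j : ℂ)
            * (x : ℂ) ^ (r - j) * deriv ((Pop ℏ)^[k - j] φ) x)
        = (c ^ (j + 1) * (k.choose j : ℂ) * (r.descFactorial (j + 1) : ℂ)
            * (x : ℂ) ^ (r - (j + 1)) * (Pop ℏ)^[k + 1 - (j + 1)] φ x)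
          + (c ^ j * (k.choose j : ℂ) * (r.descFactorial j : ℂ)
            * (x : ℂ) ^ (r - j) * (Pop ℏ)^[k + 1 - j] φ x) := by
      intro j hj
      simp only [Finset.mem_range] at hj
      have h1 : r.descFactorial (j + 1) = (r - j) * r.descFactorial j := Nat.descFactorial_succ r j
      have h2 : r - (j + 1) = r - j - 1 := by omega
      have h3 : k + 1 - (j + 1) = k - j := by omega
      have h4 : (Pop ℏ)^[k + 1 - j] φ x = c * deriv ((Pop ℏ)^[k - j] φ) x := by
        have : k + 1 - j = (k - j) + 1 := by omega
        rw [this, Function.iterate_succ_apply']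
        rfl
      rw [h1, h2, h3, h4]
      push_cast
      ring
    rw [Finset.sum_congr rfl step, Finset.sum_add_distrib]
    -- Now goal: ΣA + ΣB = Σ_{range(k+2)} F
    have htarget : ∑ j ∈ Finset.range (k + 1 + 1),
        c ^ j * ((k + 1).choose j : ℂ) * (r.descFactorial j : ℂ) * (x : ℂ) ^ (r - j)
          * (Pop ℏ)^[k + 1 - j] φ x
      = (∑ j ∈ Finset.range (k + 1),
          c ^ (j + 1) * ((k + 1).choose (j + 1) : ℂ) * (r.descFactorial (j + 1) : ℂ)
            * (x : ℂ) ^ (r - (j + 1)) * (Pop ℏ)^[k + 1 - (j + 1)] φ x)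
        + (x : ℂ) ^ r * (Pop ℏ)^[k + 1] φ x := by
      rw [Finset.sum_range_succ']
      simp
    rw [htarget]
    have hsplit : ∀ j ∈ Finset.range (k + 1),
        c ^ (j + 1) * ((k + 1).choose (j + 1) : ℂ) * (r.descFactorial (j + 1) : ℂ)
            * (x : ℂ) ^ (r - (j + 1)) * (Pop ℏ)^[k + 1 - (j + 1)] φ x
        = (c ^ (j + 1) * (k.choose j : ℂ) * (r.descFactorial (j + 1) : ℂ)
            * (x : ℂ) ^ (r - (j + 1)) * (Pop ℏ)^[k + 1 - (j + 1)] φ x)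
          + (c ^ (j + 1) * (k.choose (j + 1) : ℂ) * (r.descFactorial (j + 1) : ℂ)
            * (x : ℂ) ^ (r - (j + 1)) * (Pop ℏ)^[k + 1 - (j + 1)] φ x) := by
      intro j hj
      rw [Nat.choose_succ_succ]
      push_cast
      ring
    rw [Finset.sum_congr rfl hsplit, Finset.sum_add_distrib]
    have hB : ∑ j ∈ Finset.range (k + 1),
        c ^ j * (k.choose j : ℂ) * (r.descFactorial j : ℂ) * (x : ℂ) ^ (r - j)
          * (Pop ℏ)^[k + 1 - j] φ x
      = (∑ j ∈ Finset.range k,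
          c ^ (j + 1) * (k.choose (j + 1) : ℂ) * (r.descFactorial (j + 1) : ℂ)
            * (x : ℂ) ^ (r - (j + 1)) * (Pop ℏ)^[k + 1 - (j + 1)] φ x)
        + (x : ℂ) ^ r * (Pop ℏ)^[k + 1] φ x := by
      rw [Finset.sum_range_succ']
      simp
    have hE : ∑ j ∈ Finset.range (k + 1),
        c ^ (j + 1) * (k.choose (j + 1) : ℂ) * (r.descFactorial (j + 1) : ℂ)
          * (x : ℂ) ^ (r - (j + 1)) * (Pop ℏ)^[k + 1 - (j + 1)] φ x
      = ∑ j ∈ Finset.range k,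
          c ^ (j + 1) * (k.choose (j + 1) : ℂ) * (r.descFactorial (j + 1) : ℂ)
            * (x : ℂ) ^ (r - (j + 1)) * (Pop ℏ)^[k + 1 - (j + 1)] φ x := by
      rw [Finset.sum_range_succ]
      simp [Nat.choose_succ_self]
    rw [hB, hE]
    ring

lemma hockey_s15 (s j : ℕ) :
    ∑ m ∈ Finset.range (s + 1), m.choose j = (s + 1).choose (j + 1) := by
  rw [← Nat.sum_Icc_choose s j]
  symm
  apply Finset.sum_subset
  · intro m hm
    simp only [Finset.mem_Icc] at hm
    simp only [Finset.mem_range]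
    omega
  · intro m hm hm'
    simp only [Finset.mem_range] at hm
    simp only [Finset.mem_Icc] at hm'
    exact Nat.choose_eq_zero_of_lt (by omega)

lemma natcoef (s r j : ℕ) :
    (j + 1) * ((s + 1).choose (j + 1) * r.descFactorial j)
      = (s + 1) * (s.choose j * (r.choose j * j.factorial)) := by
  have h : (s + 1) * s.choose j = (s + 1).choose (j + 1) * (j + 1) :=
    Nat.add_one_mul_choose_eq s j
  rw [Nat.descFactorial_eq_factorial_mul_choose]
  calc (j + 1) * ((s + 1).choose (j + 1) * (j.factorial * r.choose j))
      = ((s + 1).choose (j + 1) * (j + 1)) * (j.factorial * r.choose j) := by ring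
    _ = ((s + 1) * s.choose j) * (j.factorial * r.choose j) := by rw [← h]
    _ = (s + 1) * (s.choose j * (r.choose j * j.factorial)) := by ring

theorem bj_normal_order (ℏ : ℝ) (hℏ : 0 < ℏ) (r s : ℕ)
    (ψ : ℝ → ℂ) (hψ : ContDiff ℝ (⊤ : ℕ∞) ψ) (x : ℝ) :
    (1 / (s + 1) : ℂ) * ∑ ℓ ∈ Finset.range (s + 1),
        (Pop ℏ)^[s - ℓ] (Xop^[r] ((Pop ℏ)^[ℓ] ψ)) x
      = ∑ ℓ ∈ Finset.range (min r s + 1),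
        (-Complex.I * ℏ)^ℓ * (s.choose ℓ : ℂ) * (r.choose ℓ : ℂ)
          * ((ℓ.factorial : ℂ) / (ℓ + 1)) * Xop^[r - ℓ] ((Pop ℏ)^[s - ℓ] ψ) x := by
  set c : ℂ := -Complex.I * ℏ with hc
  -- Step 1: expand each Born-Jordan term into normally ordered form
  have hL : ∀ ℓ ∈ Finset.range (s + 1),
      (Pop ℏ)^[s - ℓ] (Xop^[r] ((Pop ℏ)^[ℓ] ψ)) x
      = ∑ j ∈ Finset.range (s + 1),
          c ^ j * ((s - ℓ).choose j : ℂ) * (r.descFactorial j : ℂ) * (x : ℂ) ^ (r - j)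
            * (Pop ℏ)^[s - j] ψ x := by
    intro ℓ hℓ
    simp only [Finset.mem_range] at hℓ
    rw [key ℏ r (s - ℓ) ((Pop ℏ)^[ℓ] ψ) (Pop_iter_contDiff ℏ ℓ hψ) x]
    have hsub : Finset.range (s - ℓ + 1) ⊆ Finset.range (s + 1) := by
      apply Finset.range_subset_range.mpr; omega
    rw [show (s - ℓ + 1) = (s - ℓ + 1) from rfl]
    apply Finset.sum_subset hsub ?_ |>.symm.trans ?_ |>.symm
    · intro j hj hj'
      simp only [Finset.mem_range] at hj hj'
      have : (s - ℓ).choose j = 0 := Nat.choose_eq_zero_of_lt (by omega)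
      rw [this]
      push_cast
      ring
    · apply Finset.sum_congr rfl
      intro j hj
      simp only [Finset.mem_range] at hj
      have hcomp : (Pop ℏ)^[s - ℓ - j] ((Pop ℏ)^[ℓ] ψ) = (Pop ℏ)^[s - j] ψ := by
        rw [← Function.iterate_add_apply]
        congr 1
        omega
      rw [hcomp]
  rw [Finset.sum_congr rfl hL, Finset.sum_comm, Finset.mul_sum]
  -- Step 2: extend RHS sum to range (s+1)
  have hRext : ∑ ℓ ∈ Finset.range (min r s + 1),
      c ^ ℓ * (s.choose ℓ : ℂ) * (r.choose ℓ : ℂ) * ((ℓ.factorial : ℂ) / (ℓ + 1))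
        * Xop^[r - ℓ] ((Pop ℏ)^[s - ℓ] ψ) x
    = ∑ ℓ ∈ Finset.range (s + 1),
      c ^ ℓ * (s.choose ℓ : ℂ) * (r.choose ℓ : ℂ) * ((ℓ.factorial : ℂ) / (ℓ + 1))
        * Xop^[r - ℓ] ((Pop ℏ)^[s - ℓ] ψ) x := by
    apply Finset.sum_subset
    · apply Finset.range_subset_range.mpr
      have := Nat.min_le_right r s
      omega
    · intro j hj hj'
      simp only [Finset.mem_range] at hj hj'
      have : r.choose j = 0 := Nat.choose_eq_zero_of_lt (by omega)
      rw [this]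
      push_cast
      ring
  rw [hRext]
  apply Finset.sum_congr rfl
  intro j hj
  simp only [Finset.mem_range] at hj
  -- Step 3: per-j identity
  have hsum : ∑ ℓ ∈ Finset.range (s + 1),
      c ^ j * ((s - ℓ).choose j : ℂ) * (r.descFactorial j : ℂ) * (x : ℂ) ^ (r - j)
        * (Pop ℏ)^[s - j] ψ x
    = (((s + 1).choose (j + 1) : ℕ) : ℂ)
        * (c ^ j * (r.descFactorial j : ℂ) * (x : ℂ) ^ (r - j) * (Pop ℏ)^[s - j] ψ x) := by
    have h1 : ∀ ℓ ∈ Finset.range (s + 1),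
        c ^ j * ((s - ℓ).choose j : ℂ) * (r.descFactorial j : ℂ) * (x : ℂ) ^ (r - j)
          * (Pop ℏ)^[s - j] ψ x
        = (((s - ℓ).choose j : ℕ) : ℂ)
            * (c ^ j * (r.descFactorial j : ℂ) * (x : ℂ) ^ (r - j) * (Pop ℏ)^[s - j] ψ x) := by
      intro ℓ _; ring
    rw [Finset.sum_congr rfl h1, ← Finset.sum_mul]
    congr 1
    rw [← Nat.cast_sum]
    congr 1
    have h2 : ∑ ℓ ∈ Finset.range (s + 1), (s - ℓ).choose j
        = ∑ m ∈ Finset.range (s + 1), m.choose j := by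
      rw [← Finset.sum_range_reflect (fun m => m.choose j) (s + 1)]
      apply Finset.sum_congr rfl
      intro ℓ hℓ
      simp only [Finset.mem_range] at hℓ
      congr 1
    rw [h2, hockey_s15]
  rw [hsum, Xop_iter]
  -- coefficient identity
  have hnat := natcoef s r j
  have hs1 : ((s : ℂ) + 1) ≠ 0 := by
    have : (0 : ℝ) < (s : ℝ) + 1 := by positivity
    intro h
    have := congrArg Complex.re h
    simp at this
    linarith [Nat.cast_nonneg (α := ℝ) s]
  have hj1 : ((j : ℂ) + 1) ≠ 0 := by
    intro h
    have := congrArg Complex.re h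
    simp at this
    linarith [Nat.cast_nonneg (α := ℝ) j]
  have hnatC : ((j : ℂ) + 1) * ((((s + 1).choose (j + 1) : ℕ) : ℂ) * (r.descFactorial j : ℂ))
      = ((s : ℂ) + 1) * ((s.choose j : ℂ) * ((r.choose j : ℂ) * (j.factorial : ℂ))) := by
    have := congrArg (Nat.cast : ℕ → ℂ) hnat
    push_cast at this
    push_cast
    linear_combination this
  field_simp
  ring_nf
  ring_nf at hnatC
  linear_combination (c ^ j * (x : ℂ) ^ (r - j) * (Pop ℏ)^[s - j] ψ x) * hnatC
end

section
/- Weyl quantization of x^r p^s, Op_W(x^r p^s) = (1/2^s) Σ_{ℓ=0}^s C(s,ℓ) p̂^{s−ℓ}x̂^r p̂^ℓ, equals Σ_{ℓ=0}^{min(r,s)} (−iℏ)^ℓ C(s,ℓ) C(r,ℓ) (ℓ!/2^ℓ) x̂^{r−ℓ} p̂^{s−ℓ} as operators on C^∞(ℝ,ℂ). -/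
open scoped ContDiff

open ContDiff in
lemma smooth_itd {φ : ℝ → ℂ} (hφ : ContDiff ℝ ∞ φ) (n : ℕ) :
    ContDiff ℝ ∞ (iteratedDeriv n φ) := by
  rw [iteratedDeriv_eq_iterate]; exact hφ.iterate_deriv n

lemma Pop_iterate (ℏ : ℝ) {φ : ℝ → ℂ} (hφ : ContDiff ℝ ∞ φ) (n : ℕ) :
    (Pop ℏ)^[n] φ = fun x => (-Complex.I * ℏ)^n * iteratedDeriv n φ x := by
  induction n with
  | zero => simp
  | succ n ih =>
    rw [Function.iterate_succ_apply', ih]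
    funext x
    simp only [Pop]
    rw [deriv_const_mul _ (((smooth_itd hφ n).differentiable (by simp)).differentiableAt),
      iteratedDeriv_succ]
    ring

lemma Xop_iterate (φ : ℝ → ℂ) (r : ℕ) : Xop^[r] φ = fun x : ℝ => (x : ℂ)^r * φ x := by
  induction r with
  | zero => simp
  | succ r ih =>
    rw [Function.iterate_succ_apply', ih]
    funext x
    simp only [Xop, pow_succ]
    ring

lemma itd_itd {φ : ℝ → ℂ} (a b : ℕ) :
    iteratedDeriv a (iteratedDeriv b φ) = iteratedDeriv (a + b) φ := by
  simp only [iteratedDeriv_eq_iterate]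
  exact (Function.iterate_add_apply deriv a b φ).symm

open Finset in
lemma leibniz_pow {φ : ℝ → ℂ} (hφ : ContDiff ℝ ∞ φ) (r : ℕ) (n : ℕ) :
    iteratedDeriv n (fun x : ℝ => (x : ℂ)^r * φ x) =
    fun x : ℝ => ∑ k ∈ range (n + 1),
      (n.choose k : ℂ) * (r.descFactorial k : ℂ) * (x : ℂ)^(r - k)
        * iteratedDeriv (n - k) φ x := by
  induction n with
  | zero => simp
  | succ n ih =>
    rw [iteratedDeriv_succ, ih]
    funext x
    have hg : ∀ m : ℕ, HasDerivAt (fun y : ℝ => iteratedDeriv m φ y)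
        (iteratedDeriv (m + 1) φ x) x := by
      intro m
      have := (((smooth_itd hφ m).differentiable (by simp)).differentiableAt
        (x := x)).hasDerivAt
      rwa [← iteratedDeriv_succ] at this
    have hx : ∀ m : ℕ, HasDerivAt (fun y : ℝ => (y : ℂ)^m)
        ((m : ℂ) * (x : ℂ)^(m - 1)) x := by
      intro m
      exact (hasDerivAt_pow m (x : ℂ)).comp_ofReal
    have hterm : ∀ k ∈ range (n + 1), HasDerivAt
        (fun y : ℝ => (n.choose k : ℂ) * (r.descFactorial k : ℂ) * (y : ℂ)^(r - k)
          * iteratedDeriv (n - k) φ y)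
        ((n.choose k : ℂ) * ((r.descFactorial (k+1) : ℂ) * (x : ℂ)^(r - (k+1))
            * iteratedDeriv (n - k) φ x
          + (r.descFactorial k : ℂ) * (x : ℂ)^(r - k)
            * iteratedDeriv (n - k + 1) φ x)) x := by
      intro k hk
      have h1 := ((hx (r - k)).mul (hg (n - k))).const_mul
        ((n.choose k : ℂ) * (r.descFactorial k : ℂ))
      simp only [Pi.mul_apply] at h1
      refine HasDerivAt.congr_deriv (h1.congr_of_eventuallyEq (Filter.Eventually.of_forall fun y => ?_)) ?_
      · beta_reduce; ring
      · have hdf : (r.descFactorial (k+1) : ℂ) = ((r - k : ℕ) : ℂ) * (r.descFactorial k : ℂ) := by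
          rw [Nat.descFactorial_succ]; push_cast; ring
        have hexp : r - (k + 1) = r - k - 1 := by omega
        rw [hdf, hexp]
        ring
    have hsum : HasDerivAt (fun y : ℝ => ∑ k ∈ range (n + 1),
        (n.choose k : ℂ) * (r.descFactorial k : ℂ) * (y : ℂ)^(r - k)
          * iteratedDeriv (n - k) φ y)
        (∑ k ∈ range (n + 1), (n.choose k : ℂ) *
          ((r.descFactorial (k+1) : ℂ) * (x : ℂ)^(r - (k+1)) * iteratedDeriv (n - k) φ x
          + (r.descFactorial k : ℂ) * (x : ℂ)^(r - k) * iteratedDeriv (n - k + 1) φ x)) x :=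
      HasDerivAt.fun_sum hterm
    rw [hsum.deriv]
    -- now pure algebra/combinatorics
    set u : ℕ → ℂ := fun j => (r.descFactorial j : ℂ) * (x : ℂ)^(r - j)
      * iteratedDeriv (n + 1 - j) φ x with hu
    have hA : ∀ k, k ∈ range (n+1) → (n.choose k : ℂ) *
        ((r.descFactorial (k+1) : ℂ) * (x : ℂ)^(r - (k+1)) * iteratedDeriv (n - k) φ x
          + (r.descFactorial k : ℂ) * (x : ℂ)^(r - k) * iteratedDeriv (n - k + 1) φ x)
        = (n.choose k : ℂ) * u (k+1) + (n.choose k : ℂ) * u k := by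
      intro k hk
      simp only [mem_range] at hk
      have h1 : n - k = n + 1 - (k + 1) := by omega
      have h2 : n - k + 1 = n + 1 - k := by omega
      rw [h2, h1, hu]
      ring
    rw [Finset.sum_congr rfl hA, Finset.sum_add_distrib]
    have hRHS : ∑ k ∈ range (n + 2), ((n+1).choose k : ℂ) * (r.descFactorial k : ℂ)
        * (x : ℂ)^(r - k) * iteratedDeriv (n + 1 - k) φ x
        = ∑ k ∈ range (n + 2), ((n+1).choose k : ℂ) * u k := by
      apply Finset.sum_congr rfl; intro k _; rw [hu]; ring
    rw [hRHS, Finset.sum_range_succ' (fun k => ((n+1).choose k : ℂ) * u k) (n+1)]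
    have hPascal : ∀ k, (((n+1).choose (k+1) : ℕ) : ℂ)
        = (n.choose k : ℂ) + (n.choose (k+1) : ℂ) := by
      intro k; rw [Nat.choose_succ_succ]; push_cast; ring
    have : ∑ k ∈ range (n + 1), ((n+1).choose (k+1) : ℂ) * u (k+1)
        = ∑ k ∈ range (n + 1), ((n.choose k : ℂ) * u (k+1) + (n.choose (k+1) : ℂ) * u (k+1)) := by
      apply Finset.sum_congr rfl; intro k _; rw [hPascal]; ring
    rw [this, Finset.sum_add_distrib]
    have hB : ∑ k ∈ range (n + 1), (n.choose k : ℂ) * u k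
        = ∑ k ∈ range (n + 1), (n.choose (k+1) : ℂ) * u (k+1) + ((n+1).choose 0 : ℂ) * u 0 := by
      rw [Finset.sum_range_succ (fun k => (n.choose (k+1) : ℂ) * u (k+1)) n]
      rw [Nat.choose_succ_self]
      push_cast
      rw [Finset.sum_range_succ' (fun k => (n.choose k : ℂ) * u k) n]
      simp
    rw [hB]
    ring

open Finset in
lemma choose_swap {s ℓ k : ℕ} (hk : k ≤ s) : s.choose ℓ * (s - ℓ).choose k
    = s.choose k * (s - k).choose ℓ := by
  by_cases hℓ : ℓ ≤ s
  · by_cases h : ℓ + k ≤ s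
    · have e1 := Nat.choose_mul (n := s) (Nat.le_add_right ℓ k)
      have e2 := Nat.choose_mul (n := s) (Nat.le_add_left k ℓ)
      rw [Nat.add_sub_cancel_left] at e1
      rw [Nat.add_sub_cancel] at e2
      rw [← e1, ← e2, Nat.choose_symm_add]
    · rw [Nat.choose_eq_zero_of_lt (by omega : s - ℓ < k),
        Nat.choose_eq_zero_of_lt (by omega : s - k < ℓ)]
      simp
  · rw [Nat.choose_eq_zero_of_lt (by omega : s < ℓ),
      Nat.choose_eq_zero_of_lt (by omega : s - k < ℓ)]
    simp

open Finset in
lemma sum_choose_choose (s k : ℕ) (hk : k ≤ s) :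
    ∑ ℓ ∈ range (s + 1), s.choose ℓ * (s - ℓ).choose k = s.choose k * 2^(s - k) := by
  have h1 : ∀ ℓ ∈ range (s+1), s.choose ℓ * (s - ℓ).choose k
      = s.choose k * (s - k).choose ℓ := fun ℓ _ => choose_swap hk
  rw [Finset.sum_congr rfl h1, ← Finset.mul_sum]
  congr 1
  rw [← Nat.sum_range_choose (s - k)]
  symm
  apply Finset.sum_subset
  · exact Finset.range_subset_range.mpr (by omega)
  · intro ℓ _ hℓ
    simp only [mem_range, not_lt] at hℓ
    exact Nat.choose_eq_zero_of_lt (by omega)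

lemma itd_const_mul {f : ℝ → ℂ} (hf : ContDiff ℝ ∞ f) (a : ℂ) (n : ℕ) :
    iteratedDeriv n (fun x => a * f x) = fun x => a * iteratedDeriv n f x := by
  induction n with
  | zero => simp
  | succ n ih =>
    rw [iteratedDeriv_succ, ih]
    funext x
    rw [deriv_const_mul _
      (((smooth_itd hf n).differentiable (by simp)).differentiableAt),
      iteratedDeriv_succ]

lemma const_mul_itd {ψ : ℝ → ℂ} (hψ : ContDiff ℝ ∞ ψ) (c : ℂ) (m ℓ : ℕ) :
    iteratedDeriv m (fun x : ℝ => c * iteratedDeriv ℓ ψ x)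
      = fun x => c * iteratedDeriv (m + ℓ) ψ x := by
  rw [itd_const_mul (smooth_itd hψ ℓ) c m]
  funext x
  rw [itd_itd]

open Finset ContDiff in
/-- McCoy's formula for the monomial Weyl quantization. -/
theorem weyl_normal_order (ℏ : ℝ) (hℏ : 0 < ℏ) (r s : ℕ)
    (ψ : ℝ → ℂ) (hψ : ContDiff ℝ (⊤ : ℕ∞) ψ) (x : ℝ) :
    (1 / 2^s : ℂ) * ∑ ℓ ∈ Finset.range (s + 1),
        (s.choose ℓ : ℂ) * (Pop ℏ)^[s - ℓ] (Xop^[r] ((Pop ℏ)^[ℓ] ψ)) x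
      = ∑ ℓ ∈ Finset.range (min r s + 1),
        (-Complex.I * ℏ)^ℓ * (s.choose ℓ : ℂ) * (r.choose ℓ : ℂ)
          * ((ℓ.factorial : ℂ) / 2^ℓ) * Xop^[r - ℓ] ((Pop ℏ)^[s - ℓ] ψ) x := by
  have hpsi : ContDiff ℝ ∞ ψ := hψ.of_le (by simp)
  set c : ℂ := -Complex.I * ℏ with hc
  -- rewrite each LHS summand
  have hL : ∀ ℓ ∈ range (s + 1), (s.choose ℓ : ℂ) * (Pop ℏ)^[s - ℓ] (Xop^[r] ((Pop ℏ)^[ℓ] ψ)) x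
      = ∑ k ∈ range (s + 1), c^s * ((s.choose ℓ : ℂ) * (((s - ℓ).choose k : ℂ)
          * (r.descFactorial k : ℂ) * (x:ℂ)^(r - k) * iteratedDeriv (s - k) ψ x)) := by
    intro ℓ hℓ
    rw [mem_range] at hℓ
    have hℓs : ℓ ≤ s := by omega
    rw [Pop_iterate ℏ hpsi ℓ, Xop_iterate]
    have hφ : ContDiff ℝ ∞ (fun x : ℝ => c^ℓ * iteratedDeriv ℓ ψ x) :=
      contDiff_const.mul (smooth_itd hpsi ℓ)
    have hsm : ContDiff ℝ ∞ (fun x : ℝ => (x:ℂ)^r * (c^ℓ * iteratedDeriv ℓ ψ x)) :=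
      (Complex.ofRealCLM.contDiff.pow r).mul hφ
    rw [Pop_iterate ℏ hsm (s - ℓ), leibniz_pow hφ r (s - ℓ)]
    simp only [← hc]
    rw [Finset.mul_sum, Finset.mul_sum]
    -- first identify the summand for k in range (s - ℓ + 1)
    have hterm : ∀ k ∈ range (s - ℓ + 1),
        (s.choose ℓ : ℂ) * (c^(s-ℓ) * (((s - ℓ).choose k : ℂ) * (r.descFactorial k : ℂ)
          * (x:ℂ)^(r - k) * iteratedDeriv (s - ℓ - k) (fun x : ℝ => c^ℓ * iteratedDeriv ℓ ψ x) x))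
        = c^s * ((s.choose ℓ : ℂ) * (((s - ℓ).choose k : ℂ) * (r.descFactorial k : ℂ)
          * (x:ℂ)^(r - k) * iteratedDeriv (s - k) ψ x)) := by
      intro k hk
      rw [mem_range] at hk
      rw [const_mul_itd hpsi (c^ℓ) (s - ℓ - k) ℓ]
      have h1 : s - ℓ - k + ℓ = s - k := by omega
      have h2 : c^(s-ℓ) * c^ℓ = c^s := by rw [← pow_add]; congr 1; omega
      rw [h1, ← h2]
      ring
    rw [Finset.sum_congr rfl hterm]
    -- extend range from (s - ℓ + 1) to (s + 1)
    apply Finset.sum_subset (Finset.range_subset_range.mpr (by omega))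
    intro k _ hk
    rw [mem_range, not_lt] at hk
    rw [Nat.choose_eq_zero_of_lt (by omega : s - ℓ < k)]
    push_cast
    ring
  rw [Finset.sum_congr rfl hL, Finset.sum_comm]
  -- inner sums over ℓ
  have hInner : ∀ k ∈ range (s + 1),
      ∑ ℓ ∈ range (s + 1), c^s * ((s.choose ℓ : ℂ) * (((s - ℓ).choose k : ℂ)
        * (r.descFactorial k : ℂ) * (x:ℂ)^(r - k) * iteratedDeriv (s - k) ψ x))
      = c^s * ((s.choose k : ℂ) * (2:ℂ)^(s-k)) * (r.descFactorial k : ℂ)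
        * (x:ℂ)^(r - k) * iteratedDeriv (s - k) ψ x := by
    intro k hk
    rw [mem_range] at hk
    have : ∀ ℓ ∈ range (s + 1), c^s * ((s.choose ℓ : ℂ) * (((s - ℓ).choose k : ℂ)
        * (r.descFactorial k : ℂ) * (x:ℂ)^(r - k) * iteratedDeriv (s - k) ψ x))
        = ((s.choose ℓ * (s-ℓ).choose k : ℕ) : ℂ)
          * (c^s * (r.descFactorial k : ℂ) * (x:ℂ)^(r - k) * iteratedDeriv (s - k) ψ x) := by
      intro ℓ _; push_cast; ring
    rw [Finset.sum_congr rfl this, ← Finset.sum_mul, ← Nat.cast_sum,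
      sum_choose_choose s k (by omega)]
    push_cast
    ring
  rw [Finset.sum_congr rfl hInner]
  -- rewrite RHS summand
  have hR : ∀ k ∈ range (min r s + 1),
      c^k * (s.choose k : ℂ) * (r.choose k : ℂ) * ((k.factorial : ℂ) / 2^k)
        * Xop^[r - k] ((Pop ℏ)^[s - k] ψ) x
      = c^s * (s.choose k : ℂ) * (r.choose k : ℂ) * ((k.factorial : ℂ) / 2^k)
        * (x:ℂ)^(r - k) * iteratedDeriv (s - k) ψ x := by
    intro k hk
    rw [mem_range] at hk
    rw [Pop_iterate ℏ hpsi (s - k), Xop_iterate]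
    have h2 : c^k * c^(s-k) = c^s := by rw [← pow_add]; congr 1; omega
    rw [← h2]
    ring
  rw [Finset.sum_congr rfl hR]
  -- extend RHS range from (min r s + 1) to (s + 1)
  rw [show ∑ k ∈ range (min r s + 1), c^s * (s.choose k : ℂ) * (r.choose k : ℂ)
        * ((k.factorial : ℂ) / 2^k) * (x:ℂ)^(r - k) * iteratedDeriv (s - k) ψ x
      = ∑ k ∈ range (s + 1), c^s * (s.choose k : ℂ) * (r.choose k : ℂ)
        * ((k.factorial : ℂ) / 2^k) * (x:ℂ)^(r - k) * iteratedDeriv (s - k) ψ x from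
    Finset.sum_subset (Finset.range_subset_range.mpr (by omega)) (by
      intro k hk1 hk
      rw [mem_range, not_lt] at hk
      rw [mem_range] at hk1
      rw [Nat.choose_eq_zero_of_lt (by omega : r < k)]
      push_cast
      ring)]
  rw [Finset.mul_sum]
  apply Finset.sum_congr rfl
  intro k hk
  rw [mem_range] at hk
  have hks : k ≤ s := by omega
  have hdf : (r.descFactorial k : ℂ) = (k.factorial : ℂ) * (r.choose k : ℂ) := by
    rw [← Nat.cast_mul, ← Nat.descFactorial_eq_factorial_mul_choose]
  have h2pow : (2:ℂ)^(s-k) * (2:ℂ)^k = (2:ℂ)^s := by rw [← pow_add]; congr 1; omega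
  rw [hdf]
  field_simp
  rw [← h2pow]
  ring
end
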